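/- Let x₁ ≠ x₂ be two particles with equal norms |x₁| = |x₂| = r. Then r(t,x₁) = r(t,x₂) for all t ≥ 0, the angle difference φ(t,x₂) − φ(t,x₁) is constant in t, and consequently the two particles never collide: y(t,x₁) ≠ y(t,x₂) for all t ≥ 0. -/
import Mathlib


open Set

/-- The central force field on the plane with potential `U`: `F(x) = −U'(|x|)·x/|x|`. -/
noncomputable def centralForce (U : ℝ → ℝ) (x : EuclideanSpace ℝ (Fin 2)) :
    EuclideanSpace ℝ (Fin 2) :=
  (-(deriv U ‖x‖) / ‖x‖) • x

/-- Rotation of a plane vector by `π/2` (the unit tangent direction times the radius). -/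
noncomputable def rot90 (x : EuclideanSpace ℝ (Fin 2)) : EuclideanSpace ℝ (Fin 2) :=
  (WithLp.equiv 2 (Fin 2 → ℝ)).symm ![-(x 1), x 0]

instance : Fact (Module.finrank ℝ (EuclideanSpace ℝ (Fin 2)) = 2) :=
  ⟨finrank_euclideanSpace_fin⟩

lemma rot90_apply0 (x : EuclideanSpace ℝ (Fin 2)) : rot90 x 0 = -(x 1) := rfl
lemma rot90_apply1 (x : EuclideanSpace ℝ (Fin 2)) : rot90 x 1 = x 0 := rfl

lemma rot90_smul (c : ℝ) (x : EuclideanSpace ℝ (Fin 2)) : rot90 (c • x) = c • rot90 x := by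
  ext i; fin_cases i <;> simp [rot90_apply0, rot90_apply1, mul_comm]

lemma rot90_add (x y : EuclideanSpace ℝ (Fin 2)) : rot90 (x + y) = rot90 x + rot90 y := by
  ext i; fin_cases i <;> simp [rot90_apply0, rot90_apply1] <;> ring

lemma rot90_rot90 (x : EuclideanSpace ℝ (Fin 2)) : rot90 (rot90 x) = -x := by
  ext i; fin_cases i <;> simp [rot90_apply0, rot90_apply1]

/-- The right-angle rotation of any orientation of the plane is `± rot90`. -/
lemma rightAngleRotation_eq_smul_rot90
    (o : Orientation ℝ (EuclideanSpace ℝ (Fin 2)) (Fin 2)) :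
    ∃ s : ℝ, (s * s = 1) ∧ ∀ v, o.rightAngleRotation v = s • rot90 v := by
  set J := o.rightAngleRotation with hJdef
  set e0 : EuclideanSpace ℝ (Fin 2) := EuclideanSpace.single (0:Fin 2) (1:ℝ) with he0
  set e1 : EuclideanSpace ℝ (Fin 2) := EuclideanSpace.single (1:Fin 2) (1:ℝ) with he1
  have h0 : J e0 0 = 0 := by
    have := o.inner_rightAngleRotation_self e0
    rwa [he0, EuclideanSpace.inner_single_right, one_mul, starRingEnd_apply, star_trivial] at this
  set s : ℝ := J e0 1 with hs
  have hnorm1 : ‖J e0‖ = 1 := by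
    rw [LinearIsometryEquiv.norm_map, he0, EuclideanSpace.norm_single, norm_one]
  have hs2 : s * s = 1 := by
    have h2 : ‖J e0‖ ^ 2 = 1 := by rw [hnorm1]; norm_num
    rw [EuclideanSpace.norm_eq] at h2
    rw [Real.sq_sqrt (by positivity)] at h2
    simp [Fin.sum_univ_two, h0, Real.norm_eq_abs, ← hs, sq_abs, sq] at h2
    linarith [h2]
  refine ⟨s, hs2, ?_⟩
  have hJe0 : J e0 = s • e1 := by
    ext i; fin_cases i <;> simp [h0, ← hs, he1, EuclideanSpace.single_apply]
  have hJe1 : J e1 = (-s) • e0 := by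
    have := o.rightAngleRotation_rightAngleRotation e0
    rw [← hJdef, hJe0, map_smul] at this
    have h3 : s • (s • J e1) = s • (-e0) := by rw [this]
    rw [smul_smul, hs2, one_smul] at h3
    rw [h3, neg_smul, smul_neg]
  intro v
  have hdec : v = v 0 • e0 + v 1 • e1 := by
    ext i; fin_cases i <;> simp [he0, he1, EuclideanSpace.single_apply]
  have hrot : rot90 v = v 0 • e1 - v 1 • e0 := by
    ext i; fin_cases i <;>
      simp [rot90_apply0, rot90_apply1, he0, he1, EuclideanSpace.single_apply]
  calc J v = J (v 0 • e0 + v 1 • e1) := by rw [← hdec]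
    _ = v 0 • J e0 + v 1 • J e1 := by rw [map_add, map_smul, map_smul]
    _ = s • (v 0 • e1 - v 1 • e0) := by rw [hJe0, hJe1]; module
    _ = s • rot90 v := by rw [hrot]

lemma hasDerivAt_isometry_comp (f : EuclideanSpace ℝ (Fin 2) ≃ₗᵢ[ℝ] EuclideanSpace ℝ (Fin 2))
    {c : ℝ → EuclideanSpace ℝ (Fin 2)} {c' : EuclideanSpace ℝ (Fin 2)} {t : ℝ}
    (h : HasDerivAt c c' t) : HasDerivAt (fun u => f (c u)) (f c') t := by
  have := (f.toContinuousLinearEquiv.toContinuousLinearMap).hasFDerivAt.comp_hasDerivAt t h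
  exact this

/-- Central field on the plane with initial radial velocity `g(|x|)` and
initial angular velocity `h(|x|)` depending only on `|x|`, solutions being unique and never
passing through the origin.  If `x₁ ≠ x₂` have equal norms `|x₁| = |x₂|`, then
`r(t,x₁) = r(t,x₂)` for all `t ≥ 0`, the (oriented) angle between the two trajectories is
constant in time, and the two particles never collide. -/
theorem central_field_equal_radii
    (U g h : ℝ → ℝ)
    (Λ₀ : Set (EuclideanSpace ℝ (Fin 2)))
    (o : Orientation ℝ (EuclideanSpace ℝ (Fin 2)) (Fin 2))
    (y y' : EuclideanSpace ℝ (Fin 2) → ℝ → EuclideanSpace ℝ (Fin 2))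
    (hU : ContDiffOn ℝ (⊤ : ℕ∞) U (Ioi (0:ℝ)))
    (hg : ContDiffOn ℝ (⊤ : ℕ∞) g (Ioi (0:ℝ)))
    (hh : ContDiffOn ℝ (⊤ : ℕ∞) h (Ioi (0:ℝ)))
    (hΛ₀_bdd : Bornology.IsBounded Λ₀)
    (hΛ₀_zero : (0 : EuclideanSpace ℝ (Fin 2)) ∉ Λ₀)
    (hy0 : ∀ x ∈ Λ₀, y x 0 = x)
    (hy0' : ∀ x ∈ Λ₀, y' x 0 = (g ‖x‖ / ‖x‖) • x + h ‖x‖ • rot90 x)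
    (hode : ∀ x ∈ Λ₀, ∀ t, 0 ≤ t →
      HasDerivAt (y x) (y' x t) t ∧ HasDerivAt (y' x) (centralForce U (y x t)) t)
    (hnozero : ∀ x ∈ Λ₀, ∀ t, 0 ≤ t → y x t ≠ 0)
    (huniq : ∀ c c' e e' : ℝ → EuclideanSpace ℝ (Fin 2),
      (∀ t, 0 ≤ t → HasDerivAt c (c' t) t ∧ HasDerivAt c' (centralForce U (c t)) t) →
      (∀ t, 0 ≤ t → HasDerivAt e (e' t) t ∧ HasDerivAt e' (centralForce U (e t)) t) →
      c 0 = e 0 → c' 0 = e' 0 → ∀ t, 0 ≤ t → c t = e t)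
    (x₁ x₂ : EuclideanSpace ℝ (Fin 2)) (hx₁ : x₁ ∈ Λ₀) (hx₂ : x₂ ∈ Λ₀)
    (hne : x₁ ≠ x₂) (hnorm : ‖x₁‖ = ‖x₂‖) :
    (∀ t, 0 ≤ t → ‖y x₁ t‖ = ‖y x₂ t‖) ∧
    (∀ t, 0 ≤ t → o.oangle (y x₁ t) (y x₂ t) = o.oangle x₁ x₂) ∧
    (∀ t, 0 ≤ t → y x₁ t ≠ y x₂ t) := by
  set θ : Real.Angle := o.oangle x₁ x₂ with hθdef
  set f := o.rotation θ with hfdef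
  have hfx : f x₁ = x₂ := (o.rotation_oangle_eq_iff_norm_eq x₁ x₂).mpr hnorm
  obtain ⟨s, hs2, hJ⟩ := rightAngleRotation_eq_smul_rot90 o
  have hcommJ : ∀ v, o.rightAngleRotation (rot90 v) = rot90 (o.rightAngleRotation v) := by
    intro v
    rw [hJ, hJ, rot90_smul]
  have hcomm : ∀ v, f (rot90 v) = rot90 (f v) := by
    intro v
    rw [hfdef, Orientation.rotation_apply, Orientation.rotation_apply, rot90_add,
      rot90_smul, rot90_smul, hcommJ]
  have hcf : ∀ v, centralForce U (f v) = f (centralForce U v) := by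
    intro v
    simp only [centralForce, LinearIsometryEquiv.norm_map, map_smul]
  -- the second trajectory is the rotation of the first one
  have hY : ∀ t, 0 ≤ t → y x₂ t = f (y x₁ t) := by
    refine huniq (y x₂) (y' x₂) (fun t => f (y x₁ t)) (fun t => f (y' x₁ t))
      (hode x₂ hx₂) ?_ ?_ ?_
    · intro t ht
      obtain ⟨h1, h2⟩ := hode x₁ hx₁ t ht
      refine ⟨hasDerivAt_isometry_comp f h1, ?_⟩
      have := hasDerivAt_isometry_comp f h2
      rwa [← hcf] at this
    · show y x₂ 0 = f (y x₁ 0)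
      rw [hy0 x₂ hx₂, hy0 x₁ hx₁, hfx]
    · show y' x₂ 0 = f (y' x₁ 0)
      rw [hy0' x₂ hx₂, hy0' x₁ hx₁, map_add, map_smul, map_smul, hcomm, hfx, hnorm]
  refine ⟨?_, ?_, ?_⟩
  · intro t ht
    rw [hY t ht, LinearIsometryEquiv.norm_map]
  · intro t ht
    rw [hY t ht, hfdef]
    exact o.oangle_rotation_self_right (hnozero x₁ hx₁ t ht) θ
  · intro t ht hc
    have heq : f (y x₁ t) = y x₁ t := by rw [← hY t ht, ← hc]
    have hθ0 : θ = 0 :=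
      (o.rotation_eq_self_iff_angle_eq_zero (hnozero x₁ hx₁ t ht) θ).mp heq
    apply hne
    rw [← hfx, hfdef, hθ0, Orientation.rotation_zero]
    rfl
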